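/- In any n-dimensional 2-symmetric semi-Riemannian manifold of any signature, the Riemann tensor satisfies R^{ρ}_{νλμ} ∇_ρ R_{αβγδ} + R^{ρ}_{αλμ} ∇_ν R_{ρβγδ} + R^{ρ}_{βλμ} ∇_ν R_{αργδ} + R^{ρ}_{γλμ} ∇_ν R_{αβρδ} + R^{ρ}_{δλμ} ∇_ν R_{αβγρ} = 0. -/

import Mathlib

noncomputable section

open scoped BigOperators

/-! ## A local-coordinate framework for semi-Riemannian geometry

A semi-Riemannian manifold is described in a local chart: points are elements of
`Pt n := Fin n → ℝ`, a rank-`q` covariant tensor field is a map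
`Pt n → (Fin q → Fin n) → ℝ`, the metric `g` (with inverse `ginv`) determines the
Christoffel symbols of its Levi-Civita connection, the covariant derivative `covD`,
and the Riemann, Ricci, scalar and Weyl curvatures. -/

/-- Points of a local chart of an `n`-dimensional manifold. -/
abbrev Pt (n : ℕ) : Type := Fin n → ℝ

/-- A rank-`q` (covariant) tensor field, in the chart. -/
abbrev Tensor (n q : ℕ) : Type := Pt n → (Fin q → Fin n) → ℝ

/-- Partial derivative of a scalar field in the `i`-th coordinate direction. -/
def pd {n : ℕ} (i : Fin n) (f : Pt n → ℝ) (x : Pt n) : ℝ :=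
  fderiv ℝ f x (Pi.single i 1)

/-- `g` is a smooth metric of arbitrary signature, with (smooth) inverse `ginv`. -/
def IsMetric {n : ℕ} (g ginv : Pt n → Fin n → Fin n → ℝ) : Prop :=
  (∀ x μ ν, g x μ ν = g x ν μ) ∧
  (∀ μ ν, ContDiff ℝ (⊤ : ℕ∞) fun x => g x μ ν) ∧
  (∀ μ ν, ContDiff ℝ (⊤ : ℕ∞) fun x => ginv x μ ν) ∧
  (∀ x μ ν, (∑ ρ, ginv x μ ρ * g x ρ ν) = if μ = ν then (1 : ℝ) else 0)

/-- The metric `g` has Lorentzian signature `(-,+,…,+)`: at every point there is a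
frame in which it takes the form `diag (-1, 1, …, 1)`. -/
def IsLorentzian {n : ℕ} (g : Pt n → Fin n → Fin n → ℝ) : Prop :=
  ∀ x, ∃ e : Fin n → Fin n → ℝ, ∀ μ ν : Fin n,
    (∑ α, ∑ β, g x α β * e μ α * e ν β) =
      if μ = ν then (if μ.val = 0 then (-1 : ℝ) else 1) else 0

/-- Christoffel symbols `Γ^α_{βγ}` of the Levi-Civita connection of `g`. -/
def christoffel {n : ℕ} (g ginv : Pt n → Fin n → Fin n → ℝ) (x : Pt n) (α β γ : Fin n) : ℝ :=
  (1 / 2) * ∑ ρ, ginv x α ρ *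
    (pd β (fun y => g y ρ γ) x + pd γ (fun y => g y ρ β) x - pd ρ (fun y => g y β γ) x)

/-- Covariant derivative of a rank-`q` covariant tensor field:
`(covD T)_{λ α₁ … α_q} = ∇_λ T_{α₁ … α_q}`; the derivative index comes first. -/
def covD {n q : ℕ} (g ginv : Pt n → Fin n → Fin n → ℝ) (T : Tensor n q) :
    Tensor n (q + 1) := fun x idx =>
  pd (idx 0) (fun y => T y fun i => idx i.succ) x -
    ∑ i : Fin q, ∑ ρ, christoffel g ginv x ρ (idx 0) (idx i.succ) *
      T x (Function.update (fun j => idx j.succ) i ρ)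

/-- Covariant derivative `∇_λ k^μ` of a vector field `k^μ`. -/
def covDVec {n : ℕ} (g ginv : Pt n → Fin n → Fin n → ℝ) (k : Pt n → Fin n → ℝ)
    (x : Pt n) (lam μ : Fin n) : ℝ :=
  pd lam (fun y => k y μ) x + ∑ ρ, christoffel g ginv x μ lam ρ * k x ρ

/-- Riemann curvature tensor `R^α_{βγδ}` of the Levi-Civita connection of `g`. -/
def riemannUp {n : ℕ} (g ginv : Pt n → Fin n → Fin n → ℝ) (x : Pt n) (α β γ δ : Fin n) : ℝ :=
  pd γ (fun y => christoffel g ginv y α δ β) x - pd δ (fun y => christoffel g ginv y α γ β) x +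
    ∑ ρ, (christoffel g ginv x α γ ρ * christoffel g ginv x ρ δ β -
          christoffel g ginv x α δ ρ * christoffel g ginv x ρ γ β)

/-- Fully covariant Riemann tensor `R_{αβγδ} = g_{αρ} R^ρ_{βγδ}`. -/
def riemann {n : ℕ} (g ginv : Pt n → Fin n → Fin n → ℝ) : Tensor n 4 := fun x idx =>
  ∑ ρ, g x (idx 0) ρ * riemannUp g ginv x ρ (idx 1) (idx 2) (idx 3)

/-- Ricci tensor `R_{μν} = R^ρ_{μρν}`. -/
def ricci {n : ℕ} (g ginv : Pt n → Fin n → Fin n → ℝ) : Tensor n 2 := fun x idx =>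
  ∑ ρ, riemannUp g ginv x ρ (idx 0) ρ (idx 1)

/-- Scalar curvature `R = g^{μν} R_{μν}`. -/
def scalarCurv {n : ℕ} (g ginv : Pt n → Fin n → Fin n → ℝ) (x : Pt n) : ℝ :=
  ∑ μ, ∑ ν, ginv x μ ν * ricci g ginv x ![μ, ν]

/-- Weyl conformal tensor `C_{αβλμ}`, defined through the standard decomposition
`R_{αβλμ} = C_{αβλμ} + (2/(n-2)) (R_{α[λ} g_{μ]β} - R_{β[λ} g_{μ]α})
 - (R/((n-1)(n-2))) (g_{αλ} g_{βμ} - g_{αμ} g_{βλ})`. -/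
def weyl {n : ℕ} (g ginv : Pt n → Fin n → Fin n → ℝ) : Tensor n 4 := fun x idx =>
  riemann g ginv x idx -
    (2 / ((n : ℝ) - 2)) *
      ((ricci g ginv x ![idx 0, idx 2] * g x (idx 3) (idx 1) -
        ricci g ginv x ![idx 0, idx 3] * g x (idx 2) (idx 1)) / 2 -
       (ricci g ginv x ![idx 1, idx 2] * g x (idx 3) (idx 0) -
        ricci g ginv x ![idx 1, idx 3] * g x (idx 2) (idx 0)) / 2) +
    (scalarCurv g ginv x / (((n : ℝ) - 1) * ((n : ℝ) - 2))) *
      (g x (idx 0) (idx 2) * g x (idx 1) (idx 3) - g x (idx 0) (idx 3) * g x (idx 1) (idx 2))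

/-- Second-order symmetry (2-symmetry): `∇_μ ∇_ν R_{αβγδ} = 0` everywhere. -/
def TwoSymmetric {n : ℕ} (g ginv : Pt n → Fin n → Fin n → ℝ) : Prop :=
  ∀ x idx, covD g ginv (covD g ginv (riemann g ginv)) x idx = 0

/-- 2-symmetry on a set `D`: `∇_μ ∇_ν R_{αβγδ} = 0` on `D`. -/
def TwoSymmetricOn {n : ℕ} (g ginv : Pt n → Fin n → Fin n → ℝ) (D : Set (Pt n)) : Prop :=
  ∀ x ∈ D, ∀ idx, covD g ginv (covD g ginv (riemann g ginv)) x idx = 0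

/-- Semi-symmetry: `∇_[μ ∇_ν] R_{αβγδ} = 0` everywhere. -/
def SemiSymmetric {n : ℕ} (g ginv : Pt n → Fin n → Fin n → ℝ) : Prop :=
  ∀ x (μ ν α β γ δ : Fin n),
    covD g ginv (covD g ginv (riemann g ginv)) x ![μ, ν, α, β, γ, δ] =
    covD g ginv (covD g ginv (riemann g ginv)) x ![ν, μ, α, β, γ, δ]

/-- `p` is a generic point: the Riemann tensor at `p`, viewed as the endomorphism
`ω_{γδ} ↦ R^{αβ}_{γδ} ω_{γδ}` of the space of 2-forms at `p`, is non-singular. -/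
def GenericAt {n : ℕ} (g ginv : Pt n → Fin n → Fin n → ℝ) (p : Pt n) : Prop :=
  ∀ ω : Fin n → Fin n → ℝ, (∀ γ δ, ω γ δ = -ω δ γ) →
    (∀ α β, (∑ γ, ∑ δ, (∑ σ, ginv p β σ * riemannUp g ginv p α σ γ δ) * ω γ δ) = 0) →
    ω = 0

/-- `k` is a parallel null (nowhere zero) vector field on `D`. -/
def ParallelNullVectorFieldOn {n : ℕ} (g ginv : Pt n → Fin n → Fin n → ℝ)
    (D : Set (Pt n)) (k : Pt n → Fin n → ℝ) : Prop :=
  (∀ x ∈ D, ∀ lam μ, covDVec g ginv k x lam μ = 0) ∧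
  (∀ x ∈ D, (∑ μ, ∑ ν, g x μ ν * k x μ * k x ν) = 0) ∧
  (∀ x ∈ D, k x ≠ 0)

/-- Pullback metric of `g` along a coordinate change `φ`. -/
def pullback {n : ℕ} (g : Pt n → Fin n → Fin n → ℝ) (φ : Pt n → Pt n)
    (x : Pt n) (μ ν : Fin n) : ℝ :=
  ∑ α, ∑ β, g (φ x) α β * pd μ (fun y => φ y α) x * pd ν (fun y => φ y β) x

/-- `k`-th iterated covariant derivative of a rank-`q` tensor field. -/
def covDIter {n : ℕ} (g ginv : Pt n → Fin n → Fin n → ℝ) (q : ℕ) :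
    (k : ℕ) → Tensor n q → Tensor n (q + k)
  | 0, T => T
  | k + 1, T => covD g ginv (covDIter g ginv q k T)

/-- Totally antisymmetric Levi-Civita symbol. -/
def lcSymbol {n : ℕ} (idx : Fin n → Fin n) : ℝ :=
  if h : Function.Bijective idx then ((Equiv.Perm.sign (Equiv.ofBijective idx h) : ℤ) : ℝ) else 0

/-- The metric volume element `n`-form `√|det g| ε_{μ₁…μ_n}`. -/
def volForm {n : ℕ} (g : Pt n → Fin n → Fin n → ℝ) : Tensor n n := fun x idx =>
  Real.sqrt |Matrix.det (Matrix.of (g x))| * lcSymbol idx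

/-- Formal curvature invariants of rank `q`: tensor fields constructed polynomially
from the metric, its inverse, the Riemann tensor, the volume `n`-form, covariant
derivatives, tensor products, (metric) contractions, index permutations, sums and
scalar multiples. -/
inductive TExpr (n : ℕ) : ℕ → Type where
  | metric : TExpr n 2
  | inv : TExpr n 2
  | riem : TExpr n 4
  | eps : TExpr n n
  | cd : {q : ℕ} → TExpr n q → TExpr n (q + 1)
  | tprod : {q r : ℕ} → TExpr n q → TExpr n r → TExpr n (q + r)
  | contr : {q : ℕ} → TExpr n (q + 2) → TExpr n q
  | permute : {q : ℕ} → Equiv.Perm (Fin q) → TExpr n q → TExpr n q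
  | add : {q : ℕ} → TExpr n q → TExpr n q → TExpr n q
  | smul : {q : ℕ} → ℝ → TExpr n q → TExpr n q

/-- Evaluation of a formal curvature invariant as a tensor field. -/
def TExpr.eval {n : ℕ} (g ginv : Pt n → Fin n → Fin n → ℝ) :
    {q : ℕ} → TExpr n q → Tensor n q
  | _, .metric => fun x idx => g x (idx 0) (idx 1)
  | _, .inv => fun x idx => ginv x (idx 0) (idx 1)
  | _, .riem => riemann g ginv
  | _, .eps => volForm g
  | _, .cd e => covD g ginv (TExpr.eval g ginv e)
  | _, .tprod e₁ e₂ => fun x idx =>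
      TExpr.eval g ginv e₁ x (fun i => idx (Fin.castAdd _ i)) *
      TExpr.eval g ginv e₂ x (fun i => idx (Fin.natAdd _ i))
  | _, .contr e => fun x idx =>
      ∑ ρ, ∑ σ, ginv x ρ σ * TExpr.eval g ginv e x (Fin.cons ρ (Fin.cons σ idx))
  | _, .permute π e => fun x idx => TExpr.eval g ginv e x (idx ∘ π)
  | _, .add e₁ e₂ => fun x idx => TExpr.eval g ginv e₁ x idx + TExpr.eval g ginv e₂ x idx
  | _, .smul c e => fun x idx => c * TExpr.eval g ginv e x idx

/-- `e.HasOrderDeg m d`: the invariant `e` is homogeneous of order `m` (number of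
covariant derivatives in each term) and degree `d` (number of Riemann factors in
each term). -/
inductive TExpr.HasOrderDeg {n : ℕ} : {q : ℕ} → TExpr n q → ℕ → ℕ → Prop where
  | metric : HasOrderDeg .metric 0 0
  | inv : HasOrderDeg .inv 0 0
  | riem : HasOrderDeg .riem 0 1
  | eps : HasOrderDeg .eps 0 0
  | cd {q : ℕ} {e : TExpr n q} {m d : ℕ} : HasOrderDeg e m d → HasOrderDeg e.cd (m + 1) d
  | tprod {q r : ℕ} {e₁ : TExpr n q} {e₂ : TExpr n r} {m₁ d₁ m₂ d₂ : ℕ} :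
      HasOrderDeg e₁ m₁ d₁ → HasOrderDeg e₂ m₂ d₂ →
      HasOrderDeg (e₁.tprod e₂) (m₁ + m₂) (d₁ + d₂)
  | contr {q : ℕ} {e : TExpr n (q + 2)} {m d : ℕ} : HasOrderDeg e m d → HasOrderDeg e.contr m d
  | permute {q : ℕ} {π : Equiv.Perm (Fin q)} {e : TExpr n q} {m d : ℕ} :
      HasOrderDeg e m d → HasOrderDeg (e.permute π) m d
  | add {q : ℕ} {e₁ e₂ : TExpr n q} {m d : ℕ} :
      HasOrderDeg e₁ m d → HasOrderDeg e₂ m d → HasOrderDeg (e₁.add e₂) m d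
  | smul {q : ℕ} {c : ℝ} {e : TExpr n q} {m d : ℕ} :
      HasOrderDeg e m d → HasOrderDeg (e.smul c) m d

/-- `P` is the parallel-transport operator along the curve `γ`. -/
def IsTransportAlong {n : ℕ} (g ginv : Pt n → Fin n → Fin n → ℝ)
    (γ : ℝ → Pt n) (P : ℝ → Fin n → Fin n → ℝ) : Prop :=
  (∀ μ ν, P 0 μ ν = if μ = ν then (1 : ℝ) else 0) ∧
  ∀ t μ ν, HasDerivAt (fun s => P s μ ν)
    (-∑ lam, ∑ ρ, christoffel g ginv (γ t) μ lam ρ * deriv (fun s => γ s lam) t * P t ρ ν) t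

/-- The subspace `W` of the tangent space at `p` is invariant under the holonomy
group of `(D, g)` at `p` (parallel transport around smooth loops in `D` based at `p`). -/
def HolonomyInvariantAt {n : ℕ} (g ginv : Pt n → Fin n → Fin n → ℝ) (D : Set (Pt n))
    (p : Pt n) (W : Submodule ℝ (Fin n → ℝ)) : Prop :=
  ∀ γ : ℝ → Pt n, ContDiff ℝ (⊤ : ℕ∞) γ → (∀ t, γ t ∈ D) → γ 0 = p → γ 1 = p →
    ∀ P, IsTransportAlong g ginv γ P →
      ∀ w ∈ W, (fun μ => ∑ ν, P 1 μ ν * w ν) ∈ W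

/-- The holonomy group of `(D,g)` at `p` is reducible: it leaves invariant a
non-trivial subspace of the tangent space. -/
def ReducibleAt {n : ℕ} (g ginv : Pt n → Fin n → Fin n → ℝ) (D : Set (Pt n))
    (p : Pt n) : Prop :=
  ∃ W : Submodule ℝ (Fin n → ℝ), W ≠ ⊥ ∧ W ≠ ⊤ ∧ HolonomyInvariantAt g ginv D p W

/-- The holonomy group of `(D,g)` at `p` is non-degenerately reducible: it leaves
invariant a non-trivial subspace on which `g` is non-degenerate. -/
def NonDegReducibleAt {n : ℕ} (g ginv : Pt n → Fin n → Fin n → ℝ) (D : Set (Pt n))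
    (p : Pt n) : Prop :=
  ∃ W : Submodule ℝ (Fin n → ℝ), W ≠ ⊥ ∧ W ≠ ⊤ ∧ HolonomyInvariantAt g ginv D p W ∧
    ∀ w ∈ W, (∀ u ∈ W, (∑ μ, ∑ ν, g p μ ν * w μ * u ν) = 0) → w = 0

/-! Two-symmetry says that `∇R` is a parallel tensor field, so the commutator `[∇_λ, ∇_μ]`, which
is the curvature acting as a derivation on every index, annihilates it. In coordinates: if
`∂_λ T = A_λ T`, where `A_λ` is the Christoffel matrix `Γ_λ` acting as a derivation on the indices
of `T`, then symmetry of second partial derivatives gives `(∂_μ A_λ - ∂_λ A_μ + [A_λ, A_μ]) T = 0`.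
Since matrices act on tensors through a Lie algebra homomorphism, this operator is the action of
`∂_μ Γ_λ - ∂_λ Γ_μ + [Γ_λ, Γ_μ]`, which is the Riemann tensor `R^ρ_{βμλ}`. -/

section PartialDerivatives

variable {n : ℕ}

lemma pd_mul {f g : Pt n → ℝ} {x : Pt n} (hf : DifferentiableAt ℝ f x)
    (hg : DifferentiableAt ℝ g x) (i : Fin n) :
    pd i (fun y => f y * g y) x = pd i f x * g x + f x * pd i g x := by
  simp only [pd, fderiv_fun_mul hf hg, add_apply, smul_apply, smul_eq_mul]
  ring

lemma pd_sum {ι : Type*} (s : Finset ι) {f : ι → Pt n → ℝ} {x : Pt n}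
    (hf : ∀ k ∈ s, DifferentiableAt ℝ (f k) x) (i : Fin n) :
    pd i (fun y => ∑ k ∈ s, f k y) x = ∑ k ∈ s, pd i (f k) x := by
  simp only [pd, fderiv_fun_sum hf, sum_apply]

lemma pd_pd_eq_fderiv_fderiv {f : Pt n → ℝ} (hf : ContDiff ℝ 2 f) (i j : Fin n) (x : Pt n) :
    pd i (pd j f) x = fderiv ℝ (fderiv ℝ f) x (Pi.single i 1) (Pi.single j 1) := by
  have hdf : Differentiable ℝ (fderiv ℝ f) :=
    (hf.fderiv_right (m := 1) (by norm_num)).differentiable (by norm_num)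
  unfold pd
  rw [fderiv_clm_apply (hdf x) (differentiableAt_const _)]
  simp

lemma pd_comm {f : Pt n → ℝ} (hf : ContDiff ℝ 2 f) (i j : Fin n) (x : Pt n) :
    pd i (pd j f) x = pd j (pd i f) x := by
  rw [pd_pd_eq_fderiv_fderiv hf, pd_pd_eq_fderiv_fderiv hf]
  exact hf.contDiffAt.isSymmSndFDerivAt (by simp) _ _

lemma contDiff_pd {f : Pt n → ℝ} (hf : ContDiff ℝ (⊤ : ℕ∞) f) (i : Fin n) :
    ContDiff ℝ (⊤ : ℕ∞) (pd i f) :=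
  (hf.fderiv_right le_rfl).clm_apply contDiff_const

end PartialDerivatives

section DerivAct

variable {n q : ℕ}

open Function Finset

/-- The matrix `M` acting on covariant `q`-tensors as a derivation, i.e. on each index in turn. -/
def derivAct (M : Matrix (Fin n) (Fin n) ℝ) (v : (Fin q → Fin n) → ℝ) :
    (Fin q → Fin n) → ℝ := fun a =>
  ∑ i, ∑ ρ, M (a i) ρ * v (update a i ρ)

lemma derivAct_add (M N : Matrix (Fin n) (Fin n) ℝ) (v : (Fin q → Fin n) → ℝ) :
    derivAct (M + N) v = derivAct M v + derivAct N v := by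
  ext a
  simp only [derivAct, Matrix.add_apply, add_mul, sum_add_distrib, Pi.add_apply]

lemma derivAct_sub (M N : Matrix (Fin n) (Fin n) ℝ) (v : (Fin q → Fin n) → ℝ) :
    derivAct (M - N) v = derivAct M v - derivAct N v := by
  ext a
  simp only [derivAct, Matrix.sub_apply, sub_mul, sum_sub_distrib, Pi.sub_apply]

lemma derivAct_derivAct (M N : Matrix (Fin n) (Fin n) ℝ) (v : (Fin q → Fin n) → ℝ)
    (a : Fin q → Fin n) :
    derivAct M (derivAct N v) a = ∑ i, ∑ j, ∑ ρ, ∑ σ,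
      M (a i) ρ * N (update a i ρ j) σ * v (update (update a i ρ) j σ) := by
  simp only [derivAct, mul_sum, mul_assoc]
  exact sum_congr rfl fun i _ => sum_comm

/-- `derivAct` is a Lie algebra homomorphism: in `derivAct M (derivAct N v)` the terms acting on
two different indices are symmetric in `M` and `N`, and cancel in the commutator. -/
lemma derivAct_commutator (M N : Matrix (Fin n) (Fin n) ℝ) (v : (Fin q → Fin n) → ℝ) :
    derivAct (M * N - N * M) v = derivAct M (derivAct N v) - derivAct N (derivAct M v) := by
  ext a
  simp only [Pi.sub_apply, derivAct_derivAct]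
  set F : Matrix (Fin n) (Fin n) ℝ → Matrix (Fin n) (Fin n) ℝ → Fin q → Fin q → ℝ :=
    fun M N i j => ∑ ρ, ∑ σ, M (a i) ρ * N (update a i ρ j) σ * v (update (update a i ρ) j σ)
  have offDiag : ∀ i j, i ≠ j → F M N i j = F N M j i := by
    intro i j hij
    simp only [F, update_of_ne hij, update_of_ne hij.symm, update_comm hij]
    rw [sum_comm]
    exact sum_congr rfl fun _ _ => sum_congr rfl fun _ _ => by ring
  have diag : ∀ M N i, F M N i i = ∑ σ, (M * N) (a i) σ * v (update a i σ) := by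
    intro M N i
    simp only [F, update_self, update_idem, Matrix.mul_apply, sum_mul, mul_assoc]
    exact sum_comm
  change _ = ∑ i, ∑ j, F M N i j - ∑ i, ∑ j, F N M i j
  rw [sum_comm (f := fun i j => F N M i j), ← sum_sub_distrib]
  refine sum_congr rfl fun i _ => ?_
  rw [← sum_sub_distrib, sum_eq_single i (fun j _ hji => by rw [offDiag i j hji.symm, sub_self])
    (by simp), diag, diag, ← sum_sub_distrib]
  simp only [Matrix.sub_apply, sub_mul]

end DerivAct

section RicciIdentity

variable {n q : ℕ}

open Finset

def pdMatrix (μ : Fin n) (M : Pt n → Matrix (Fin n) (Fin n) ℝ) (x : Pt n) :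
    Matrix (Fin n) (Fin n) ℝ :=
  Matrix.of fun β ρ => pd μ (fun y => M y β ρ) x

lemma pd_derivAct {M : Pt n → Matrix (Fin n) (Fin n) ℝ} {v : Pt n → (Fin q → Fin n) → ℝ}
    {x : Pt n} (hM : ∀ β ρ, DifferentiableAt ℝ (fun y => M y β ρ) x)
    (hv : ∀ b, DifferentiableAt ℝ (fun y => v y b) x) (μ : Fin n) (a : Fin q → Fin n) :
    pd μ (fun y => derivAct (M y) (v y) a) x =
      derivAct (pdMatrix μ M x) (v x) a + derivAct (M x) (fun b => pd μ (fun y => v y b) x) a := by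
  have hterm : ∀ i ρ, DifferentiableAt ℝ (fun y => M y (a i) ρ * v y (Function.update a i ρ)) x :=
    fun i ρ => (hM _ _).mul (hv _)
  unfold derivAct
  rw [pd_sum _ fun i _ => DifferentiableAt.fun_sum fun ρ _ => hterm i ρ, ← sum_add_distrib]
  refine sum_congr rfl fun i _ => ?_
  rw [pd_sum _ fun ρ _ => hterm i ρ, ← sum_add_distrib]
  exact sum_congr rfl fun ρ _ => pd_mul (hM _ _) (hv _) μ

/-- The Ricci identity for a tensor field `T` that is parallel for the connection
`∂_lam - derivAct (Γ lam)`: the curvature of the connection annihilates `T`. -/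
theorem derivAct_curvature_eq_zero_of_pd_eq_derivAct {Γ : Fin n → Pt n → Matrix (Fin n) (Fin n) ℝ}
    (hΓ : ∀ lam β ρ, Differentiable ℝ fun y => Γ lam y β ρ) {T : Pt n → (Fin q → Fin n) → ℝ}
    (hT : ∀ a, ContDiff ℝ 2 fun y => T y a)
    (hpar : ∀ lam y a, pd lam (fun z => T z a) y = derivAct (Γ lam y) (T y) a)
    (x : Pt n) (μ lam : Fin n) :
    derivAct (pdMatrix μ (Γ lam) x - pdMatrix lam (Γ μ) x + (Γ lam x * Γ μ x - Γ μ x * Γ lam x))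
      (T x) = 0 := by
  ext a
  have hsecond : ∀ μ lam, pd μ (pd lam fun y => T y a) x =
      derivAct (pdMatrix μ (Γ lam) x) (T x) a + derivAct (Γ lam x) (derivAct (Γ μ x) (T x)) a := by
    intro μ lam
    rw [show pd lam (fun y => T y a) = fun y => derivAct (Γ lam y) (T y) a from
      funext fun y => hpar lam y a,
      pd_derivAct (fun β ρ => hΓ lam β ρ x) (fun b => (hT b).differentiable (by norm_num) x)]
    simp only [hpar]
  have hsymm := pd_comm (hT a) μ lam x
  rw [hsecond, hsecond] at hsymm
  rw [derivAct_add, derivAct_commutator, derivAct_sub]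
  simp only [Pi.add_apply, Pi.sub_apply, Pi.zero_apply]
  linarith

end RicciIdentity

section LeviCivita

variable {n q : ℕ} {g ginv : Pt n → Fin n → Fin n → ℝ}

open Finset

lemma IsMetric.contDiff_christoffel (hg : IsMetric g ginv) (α β γ : Fin n) :
    ContDiff ℝ (⊤ : ℕ∞) fun x => christoffel g ginv x α β γ := by
  obtain ⟨-, hgc, hginvc, -⟩ := hg
  exact contDiff_const.mul <| ContDiff.sum fun ρ _ => (hginvc α ρ).mul <|
    ((contDiff_pd (hgc ρ γ) β).add (contDiff_pd (hgc ρ β) γ)).sub (contDiff_pd (hgc β γ) ρ)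

lemma IsMetric.contDiff_riemannUp (hg : IsMetric g ginv) (α β γ δ : Fin n) :
    ContDiff ℝ (⊤ : ℕ∞) fun x => riemannUp g ginv x α β γ δ :=
  ((contDiff_pd (hg.contDiff_christoffel α δ β) γ).sub
    (contDiff_pd (hg.contDiff_christoffel α γ β) δ)).add <| ContDiff.sum fun ρ _ =>
      ((hg.contDiff_christoffel α γ ρ).mul (hg.contDiff_christoffel ρ δ β)).sub
        ((hg.contDiff_christoffel α δ ρ).mul (hg.contDiff_christoffel ρ γ β))

lemma IsMetric.contDiff_riemann (hg : IsMetric g ginv) (idx : Fin 4 → Fin n) :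
    ContDiff ℝ (⊤ : ℕ∞) fun x => riemann g ginv x idx :=
  ContDiff.sum fun ρ _ => (hg.2.1 (idx 0) ρ).mul (hg.contDiff_riemannUp ρ (idx 1) (idx 2) (idx 3))

lemma IsMetric.contDiff_covD (hg : IsMetric g ginv) {T : Tensor n q}
    (hT : ∀ a, ContDiff ℝ (⊤ : ℕ∞) fun x => T x a) (idx : Fin (q + 1) → Fin n) :
    ContDiff ℝ (⊤ : ℕ∞) fun x => covD g ginv T x idx :=
  (contDiff_pd (hT _) (idx 0)).sub <| ContDiff.sum fun i _ => ContDiff.sum fun ρ _ =>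
    (hg.contDiff_christoffel ρ (idx 0) (idx i.succ)).mul (hT _)

def christoffelMatrix (g ginv : Pt n → Fin n → Fin n → ℝ) (lam : Fin n) (x : Pt n) :
    Matrix (Fin n) (Fin n) ℝ :=
  Matrix.of fun β ρ => christoffel g ginv x ρ lam β

lemma covD_cons (T : Tensor n q) (x : Pt n) (lam : Fin n) (a : Fin q → Fin n) :
    covD g ginv T x (Fin.cons lam a) =
      pd lam (fun y => T y a) x - derivAct (christoffelMatrix g ginv lam x) (T x) a := by
  simp [covD, derivAct, christoffelMatrix]

lemma curvature_christoffelMatrix (x : Pt n) (μ lam : Fin n) :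
    pdMatrix μ (christoffelMatrix g ginv lam) x - pdMatrix lam (christoffelMatrix g ginv μ) x +
        (christoffelMatrix g ginv lam x * christoffelMatrix g ginv μ x -
          christoffelMatrix g ginv μ x * christoffelMatrix g ginv lam x) =
      Matrix.of fun β ρ => riemannUp g ginv x ρ β μ lam := by
  ext β ρ
  simp only [pdMatrix, christoffelMatrix, riemannUp, Matrix.add_apply, Matrix.sub_apply,
    Matrix.mul_apply, Matrix.of_apply, ← sum_sub_distrib]
  congr 1
  exact sum_congr rfl fun σ _ => by ring

theorem IsMetric.sum_riemannUp_mul_update_eq_zero (hg : IsMetric g ginv) {T : Tensor n q}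
    (hT : ∀ a, ContDiff ℝ (⊤ : ℕ∞) fun x => T x a) (hpar : ∀ x idx, covD g ginv T x idx = 0)
    (x : Pt n) (μ lam : Fin n) (a : Fin q → Fin n) :
    ∑ i, ∑ ρ, riemannUp g ginv x ρ (a i) μ lam * T x (Function.update a i ρ) = 0 := by
  have h := derivAct_curvature_eq_zero_of_pd_eq_derivAct (Γ := christoffelMatrix g ginv)
    (fun lam β ρ => (hg.contDiff_christoffel ρ lam β).differentiable (by simp))
    (fun a => (hT a).of_le (WithTop.coe_le_coe.mpr le_top))
    (fun lam y a => sub_eq_zero.mp <| (covD_cons T y lam a).symm.trans (hpar y _)) x μ lam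
  rw [curvature_christoffelMatrix] at h
  exact congrFun h a

end LeviCivita

/-- In any `n`-dimensional 2-symmetric semi-Riemannian manifold of any
signature, `R^ρ_{νλμ} ∇_ρ R_{αβγδ} + R^ρ_{αλμ} ∇_ν R_{ρβγδ} + R^ρ_{βλμ} ∇_ν R_{αργδ}
+ R^ρ_{γλμ} ∇_ν R_{αβρδ} + R^ρ_{δλμ} ∇_ν R_{αβγρ} = 0`. -/
theorem stmt6 {n : ℕ} (g ginv : Pt n → Fin n → Fin n → ℝ) (hg : IsMetric g ginv)
    (h2 : TwoSymmetric g ginv) :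
    ∀ (x : Pt n) (ν lam μ α β γ δ : Fin n),
      (∑ ρ, riemannUp g ginv x ρ ν lam μ * covD g ginv (riemann g ginv) x ![ρ, α, β, γ, δ]) +
      (∑ ρ, riemannUp g ginv x ρ α lam μ * covD g ginv (riemann g ginv) x ![ν, ρ, β, γ, δ]) +
      (∑ ρ, riemannUp g ginv x ρ β lam μ * covD g ginv (riemann g ginv) x ![ν, α, ρ, γ, δ]) +
      (∑ ρ, riemannUp g ginv x ρ γ lam μ * covD g ginv (riemann g ginv) x ![ν, α, β, ρ, δ]) +
      (∑ ρ, riemannUp g ginv x ρ δ lam μ * covD g ginv (riemann g ginv) x ![ν, α, β, γ, ρ]) = 0 := by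
  intro x ν lam μ α β γ δ
  have h := hg.sum_riemannUp_mul_update_eq_zero (hg.contDiff_covD hg.contDiff_riemann) h2
    x lam μ ![ν, α, β, γ, δ]
  rw [Fin.sum_univ_five] at h
  convert h using 8 <;> first | rfl | (symm; simp [Function.update_eq_iff, Fin.forall_fin_succ])
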